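/- A summary S = (H, w, μ) is consistent (i.e., represents at least one RDF graph) if and only if w(h) ≤ size_S(h) holds for every triple h ∈ H. -/

import Mathlib

/- ## Basic RDF notions -/

attribute [local instance] Classical.propDecidable

/-- A term is a resource or a variable. -/
inductive Term (R V : Type) where
  | res : R → Term R V
  | var : V → Term R V
deriving DecidableEq

/-- An atom is a triple of terms. -/
abbrev Atom (R V : Type) := Term R V × Term R V × Term R V

/-- An RDF graph is a finite set of triples of resources. -/
abbrev RDFGraph (R : Type) := Finset (R × R × R)

/-- A conjunctive query is a finite set of atoms. -/
abbrev CQ (R V : Type) := Finset (Atom R V)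

variable {R V : Type} [DecidableEq R] [DecidableEq V]

/-- The resources occurring in an RDF graph. -/
def graphRes (G : RDFGraph R) : Finset R :=
  G.image (fun t => t.1) ∪ G.image (fun t => t.2.1) ∪ G.image (fun t => t.2.2)

/-- A summary `S = (H, w, μ)`: a summarisation graph `H`, a weight function `w`
positive on `H`, and a summarisation function `μ` defined on a finite set `dom` of
resources, surjective onto the resources of `H` (the buckets). -/
structure Summary (R : Type) [DecidableEq R] where
  H : RDFGraph R
  w : R × R × R → ℕ
  dom : Finset R
  μ : R → R
  w_pos : ∀ h ∈ H, 0 < w h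
  surj : ∀ b ∈ graphRes H, ∃ r ∈ dom, μ r = b

/-- Application of `μ` to a resource (resources outside `dom μ` are left unchanged). -/
def appMu (S : Summary R) (r : R) : R := if r ∈ S.dom then S.μ r else r

/-- Application of `μ` to a triple of resources. -/
def muT (S : Summary R) (t : R × R × R) : R × R × R :=
  (appMu S t.1, appMu S t.2.1, appMu S t.2.2)

/-- The `S`-size of a bucket: the number of resources mapped to it. -/
def size1 (S : Summary R) (b : R) : ℕ := (S.dom.filter (fun r => S.μ r = b)).card

/-- The `S`-size of a triple of buckets. -/
def size3 (S : Summary R) (h : R × R × R) : ℕ := size1 S h.1 * size1 S h.2.1 * size1 S h.2.2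

/-- `S` represents the RDF graph `G`. -/
def represents (S : Summary R) (G : RDFGraph R) : Prop :=
  graphRes G ⊆ S.dom ∧ S.H = G.image (muT S) ∧
    ∀ h ∈ S.H, S.w h = (G.filter (fun t => muT S t = h)).card

/-- `⟦S⟧`: the set of all RDF graphs represented by `S`. -/
def worlds (S : Summary R) : Set (RDFGraph R) := {G | represents S G}

/-- A summary is consistent if it represents at least one graph. -/
def consistent (S : Summary R) : Prop := (worlds S).Nonempty

/- ## Queries, substitutions and answers -/

def varsT : Term R V → Finset V
  | .res _ => ∅
  | .var x => {x}

def resT : Term R V → Finset R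
  | .res r => {r}
  | .var _ => ∅

def varsA (a : Atom R V) : Finset V := varsT a.1 ∪ varsT a.2.1 ∪ varsT a.2.2

def resA (a : Atom R V) : Finset R := resT a.1 ∪ resT a.2.1 ∪ resT a.2.2

/-- The variables of a CQ. -/
def varsQ (q : CQ R V) : Finset V := q.biUnion varsA

/-- The resources of a CQ. -/
def resQ (q : CQ R V) : Finset R := q.biUnion resA

/-- The terms of a CQ. -/
def termsQ (q : CQ R V) : Finset (Term R V) := q.biUnion (fun a => {a.1, a.2.1, a.2.2})

/-- A substitution (a partial map from variables to resources) applied to a term. -/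
def appT (π : V → Option R) : Term R V → Option R
  | .res r => some r
  | .var x => π x

/-- Application of a substitution to a term, with a default value (only used when the
substitution is undefined on a variable of the term). -/
def appTD [Inhabited R] (π : V → Option R) (t : Term R V) : R := (appT π t).getD default

/-- Application of a substitution to an atom. -/
def appAtomD [Inhabited R] (π : V → Option R) (a : Atom R V) : R × R × R :=
  (appTD π a.1, appTD π a.2.1, appTD π a.2.2)

/-- `ans(q, G)`: the answers to the CQ `q` on the graph `G`, i.e. substitutions whose
domain is exactly `var(q)` and which map every atom of `q` into `G`. -/
def ansSet [Inhabited R] (q : CQ R V) (G : RDFGraph R) : Set (V → Option R) :=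
  {π | (∀ x, (π x).isSome ↔ x ∈ varsQ q) ∧ ∀ a ∈ q, appAtomD π a ∈ G}

/-- `E_S[q]`: the expected cardinality of `q` over the graphs represented by `S`. -/
noncomputable def expect [Inhabited R] (S : Summary R) (q : CQ R V) : ℝ :=
  (∑ᶠ G ∈ worlds S, ((ansSet q G).ncard : ℝ)) / ((worlds S).ncard : ℝ)

/-- `v_S[q]`: the variance of the cardinality of `q` over the graphs represented by `S`. -/
noncomputable def varq [Inhabited R] (S : Summary R) (q : CQ R V) : ℝ :=
  (∑ᶠ G ∈ worlds S, (((ansSet q G).ncard : ℝ) - expect S q) ^ 2) / ((worlds S).ncard : ℝ)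

/-- `μ` applied to a term. -/
def muTerm (S : Summary R) : Term R V → Term R V
  | .res r => .res (appMu S r)
  | .var x => .var x

/-- `μ` applied to an atom. -/
def muAtom (S : Summary R) (a : Atom R V) : Atom R V :=
  (muTerm S a.1, muTerm S a.2.1, muTerm S a.2.2)

/-- `μ(q)`: the CQ obtained by applying `μ` to every atom of `q`. -/
def muQ (S : Summary R) (q : CQ R V) : CQ R V := q.image (muAtom S)

/- ## Partitions of a query -/

/-- A partition of a CQ `q`: mutually disjoint nonempty subsets of `q` covering `q`. -/
def IsPartition (q : CQ R V) (P : Finset (CQ R V)) : Prop :=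
  (∀ u ∈ P, u.Nonempty) ∧ (∀ u ∈ P, ∀ u' ∈ P, u ≠ u' → Disjoint u u') ∧ P.biUnion id = q

/-- The edges of the term graph `G_P`. -/
def edgeRel (P : Finset (CQ R V)) (t t' : Term R V) : Prop :=
  ∃ u ∈ P, ∃ a ∈ u, ∃ a' ∈ u,
    (t = a.1 ∧ t' = a'.1) ∨ (t = a.2.1 ∧ t' = a'.2.1) ∨ (t = a.2.2 ∧ t' = a'.2.2)

/-- Reachability in the term graph `G_P`. -/
def reach (P : Finset (CQ R V)) (t t' : Term R V) : Prop := Relation.EqvGen (edgeRel P) t t'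

/-- `P` is unifiable: no two distinct resources of `q` are connected in `G_P`. -/
def UnifiablePart (q : CQ R V) (P : Finset (CQ R V)) : Prop :=
  ∀ r r' : R, Term.res r ∈ termsQ q → Term.res r' ∈ termsQ q →
    reach P (Term.res r) (Term.res r') → r = r'

/-- The partition base `B` of `q`: all unifiable partitions of `q`. -/
def pbase (q : CQ R V) : Set (Finset (CQ R V)) := {P | IsPartition q P ∧ UnifiablePart q P}

/-- The partial order `⪯` on partitions. -/
def pref (P P' : Finset (CQ R V)) : Prop := ∀ u ∈ P, ∃ u' ∈ P', u ⊆ u'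

/-- The strict order `≺` on partitions. -/
def sPref (P P' : Finset (CQ R V)) : Prop := pref P P' ∧ P ≠ P'

/-- Chains from `P` to `P'` in the partition base of `q` (as nonempty lists
`[P = P_0, …, P_ℓ = P']`; the length of the chain is the list length minus one). -/
def chainSet (q : CQ R V) (P P' : Finset (CQ R V)) : Set (List (Finset (CQ R V))) :=
  {l | l ≠ [] ∧ l.Chain' sPref ∧ (∀ X ∈ l, X ∈ pbase q) ∧
    l.head? = some P ∧ l.getLast? = some P'}

/-- `K(P, P')`: the number of even-length chains minus the number of odd-length chains. -/
noncomputable def Kcoef (q : CQ R V) (P P' : Finset (CQ R V)) : ℤ :=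
  ({l ∈ chainSet q P P' | Even (l.length - 1)}.ncard : ℤ)
    - ({l ∈ chainSet q P P' | Odd (l.length - 1)}.ncard : ℤ)

/-- `σ_P`: maps each variable `x` of `q` to the `≤`-least term reachable from `x` in `G_P`. -/
noncomputable def sigmaP [LinearOrder (Term R V)] (q : CQ R V) (P : Finset (CQ R V)) (x : V) :
    Term R V :=
  if h : ((termsQ q).filter (fun t => reach P (Term.var x) t)).Nonempty then
    ((termsQ q).filter (fun t => reach P (Term.var x) t)).min' h
  else Term.var x

/-- The answer `τ` to `μ(q)` on `H` satisfies the partition `P`. -/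
def satisfiesP [LinearOrder (Term R V)] (S : Summary R) (q : CQ R V) (τ : V → Option R)
    (P : Finset (CQ R V)) : Prop :=
  P ∈ pbase q ∧ ∀ x ∈ varsQ q,
    (∀ y, sigmaP q P x = Term.var y → τ x = τ y) ∧
    (∀ r, sigmaP q P x = Term.res r → τ x = some (appMu S r))

/-- `B_τ`: the partitions of the partition base satisfied by `τ`. -/
def Btau [LinearOrder (Term R V)] (S : Summary R) (q : CQ R V) (τ : V → Option R) :
    Set (Finset (CQ R V)) := {P | satisfiesP S q τ P}

/-- The variables occurring in the range of `σ_P`. -/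
noncomputable def vrngP [LinearOrder (Term R V)] (q : CQ R V) (P : Finset (CQ R V)) : Finset V :=
  (varsQ q).filter (fun y => ∃ x ∈ varsQ q, sigmaP q P x = Term.var y)

/-- The `S`-size of an optional bucket. -/
def sizeOpt (S : Summary R) (o : Option R) : ℕ := o.elim 0 (size1 S)

/-- `c(τ, P) = ∏_{x ∈ vrng(σ_P)} size_S(τ(x))`. -/
noncomputable def cCoef [LinearOrder (Term R V)] (S : Summary R) (q : CQ R V)
    (τ : V → Option R) (P : Finset (CQ R V)) : ℕ :=
  ∏ y ∈ vrngP q P, sizeOpt S (τ y)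

/-- `τ(μ(q))`. -/
noncomputable def tauMuQ [Inhabited R] (S : Summary R) (q : CQ R V) (τ : V → Option R) :
    RDFGraph R := (muQ S q).image (appAtomD τ)

/-- `n_h = |{u ∈ P : τ(μ(u)) = {h}}|`. -/
noncomputable def nCount [Inhabited R] (S : Summary R) (τ : V → Option R)
    (P : Finset (CQ R V)) (h : R × R × R) : ℕ :=
  (P.filter (fun u => u.image (fun a => appAtomD τ (muAtom S a)) = ({h} : Finset (R × R × R)))).card

/-- `F(τ, P)`, defined via falling factorials. -/
noncomputable def Fcoef [Inhabited R] (S : Summary R) (q : CQ R V) (τ : V → Option R)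
    (P : Finset (CQ R V)) : ℝ :=
  if ∀ h ∈ tauMuQ S q τ, nCount S τ P h ≤ S.w h then
    ∏ h ∈ tauMuQ S q τ,
      ((S.w h).descFactorial (nCount S τ P h) : ℝ) / ((size3 S h).descFactorial (nCount S τ P h) : ℝ)
  else 0

/-- `Exp_τ(P)`: the `τ`-expansions to `P`. -/
def ExpSet [LinearOrder (Term R V)] (S : Summary R) (q : CQ R V) (τ : V → Option R)
    (P : Finset (CQ R V)) : Set (V → Option R) :=
  {π | (∀ x, (π x).isSome ↔ x ∈ varsQ q) ∧ (∀ x r, π x = some r → r ∈ S.dom) ∧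
    ∀ x ∈ varsQ q,
      Option.map (appMu S) (π x) = τ x ∧
      (∀ y, sigmaP q P x = Term.var y → π x = π y) ∧
      (∀ r, sigmaP q P x = Term.res r → π x = some r)}

/-- `MaxExp_τ(P)`: the `τ`-expansions to `P` that are not `τ`-expansions to any `P' ≻ P`. -/
def MaxExp [LinearOrder (Term R V)] (S : Summary R) (q : CQ R V) (τ : V → Option R)
    (P : Finset (CQ R V)) : Set (V → Option R) :=
  {π ∈ ExpSet S q τ P | ¬ ∃ P' ∈ Btau S q τ, sPref P P' ∧ π ∈ ExpSet S q τ P'}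

/- ## Renaming, unification, q-error -/

def renTerm (ρ : V → V) : Term R V → Term R V
  | .res r => .res r
  | .var x => .var (ρ x)

/-- `ρ(q)`: renaming of the variables of `q` along `ρ`. -/
def renameQ (ρ : V → V) (q : CQ R V) : CQ R V :=
  q.image (fun a => (renTerm ρ a.1, renTerm ρ a.2.1, renTerm ρ a.2.2))

/-- Application of a variable-to-term substitution `κ` to a term. -/
def appK (κ : V → Term R V) : Term R V → Term R V
  | .res r => .res r
  | .var x => κ x

/-- Two atoms are unifiable if some substitution `κ` makes them equal. -/
def unifAtoms (a1 a2 : Atom R V) : Prop :=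
  ∃ κ : V → Term R V,
    (appK κ a1.1, appK κ a1.2.1, appK κ a1.2.2) = (appK κ a2.1, appK κ a2.2.1, appK κ a2.2.2)

/-- `q` is `μ`-unification-free: no two distinct atoms of `μ(q)` are unifiable. -/
def muUnifFree (S : Summary R) (q : CQ R V) : Prop :=
  ∀ a1 ∈ muQ S q, ∀ a2 ∈ muQ S q, a1 ≠ a2 → ¬ unifAtoms a1 a2

/-- The q-error of estimating a cardinality `N` as `E`. -/
noncomputable def qerror (N E : ℝ) : ℝ := max (max N 1 / max E 1) (max E 1 / max N 1)

/-- A triple of resources viewed as a (variable-free) atom. -/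
def resAtom (t : R × R × R) : Atom R V := (Term.res t.1, Term.res t.2.1, Term.res t.2.2)

/-- `μ⁻¹(h)`: the triples over `dom(μ)` that summarise as `h`. -/
def preim (S : Summary R) (h : R × R × R) : Finset (R × R × R) :=
  (S.dom ×ˢ S.dom ×ˢ S.dom).filter (fun t => muT S t = h)

private lemma mem_preim_iff {R : Type} [DecidableEq R] (S : Summary R) (h t : R × R × R) :
    t ∈ preim S h ↔ (t.1 ∈ S.dom ∧ t.2.1 ∈ S.dom ∧ t.2.2 ∈ S.dom) ∧ muT S t = h := by
  simp [preim, Finset.mem_filter, Finset.mem_product, and_assoc]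

private lemma preim_card {R : Type} [DecidableEq R] (S : Summary R) (h : R × R × R) :
    (preim S h).card = size3 S h := by
  classical
  have key : preim S h =
      (S.dom.filter (fun r => S.μ r = h.1)) ×ˢ
      ((S.dom.filter (fun r => S.μ r = h.2.1)) ×ˢ
      (S.dom.filter (fun r => S.μ r = h.2.2))) := by
    ext t
    simp only [mem_preim_iff, Finset.mem_product, Finset.mem_filter, muT, appMu,
      Prod.ext_iff]
    constructor
    · rintro ⟨⟨h1, h2, h3⟩, e1, e2, e3⟩
      simp only [h1, h2, h3, if_pos] at e1 e2 e3
      exact ⟨⟨h1, e1⟩, ⟨h2, e2⟩, h3, e3⟩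
    · rintro ⟨⟨h1, e1⟩, ⟨h2, e2⟩, h3, e3⟩
      refine ⟨⟨h1, h2, h3⟩, ?_, ?_, ?_⟩ <;> simp [h1, h2, h3, e1, e2, e3]
  rw [key]
  simp [size3, size1, Finset.card_product, mul_assoc]

private lemma mem_graphRes_of_mem {R : Type} [DecidableEq R] {G : RDFGraph R}
    {t : R × R × R} (ht : t ∈ G) :
    t.1 ∈ graphRes G ∧ t.2.1 ∈ graphRes G ∧ t.2.2 ∈ graphRes G := by
  refine ⟨?_, ?_, ?_⟩ <;> simp only [graphRes, Finset.mem_union, Finset.mem_image]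
  · exact Or.inl (Or.inl ⟨t, ht, rfl⟩)
  · exact Or.inl (Or.inr ⟨t, ht, rfl⟩)
  · exact Or.inr ⟨t, ht, rfl⟩

/-- A summary `S = (H, w, μ)` is consistent if and only if
`w(h) ≤ size_S(h)` holds for every triple `h ∈ H`. -/
theorem summary_consistent_iff {R : Type} [DecidableEq R] (S : Summary R) :
    consistent S ↔ ∀ h ∈ S.H, S.w h ≤ size3 S h := by
  classical
  constructor
  · rintro ⟨G, hdom, _, hw⟩ h hh
    rw [hw h hh, ← preim_card S h]
    apply Finset.card_le_card
    intro t ht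
    rw [Finset.mem_filter] at ht
    obtain ⟨h1, h2, h3⟩ := mem_graphRes_of_mem ht.1
    exact (mem_preim_iff S h t).2 ⟨⟨hdom h1, hdom h2, hdom h3⟩, ht.2⟩
  · intro hle
    -- choose for each h ∈ H a subset of `preim S h` of cardinality `w h`
    have hex : ∀ h ∈ S.H, ∃ T ⊆ preim S h, T.card = S.w h := by
      intro h hh
      exact Finset.exists_subset_card_eq (by rw [preim_card]; exact hle h hh)
    choose T hTsub hTcard using hex
    set G : RDFGraph R := S.H.attach.biUnion (fun h => T h.1 h.2) with hG
    have hmemG : ∀ t, t ∈ G ↔ ∃ h : {x // x ∈ S.H}, t ∈ T h.1 h.2 := by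
      intro t; simp [hG, Finset.mem_biUnion]
    have hmuT : ∀ (h : {x // x ∈ S.H}) (t : R × R × R), t ∈ T h.1 h.2 → muT S t = h.1 := by
      intro h t ht
      exact ((mem_preim_iff S h.1 t).1 (hTsub h.1 h.2 ht)).2
    refine ⟨G, ?_, ?_, ?_⟩
    · -- graphRes G ⊆ dom
      intro r hr
      simp only [graphRes, Finset.mem_union, Finset.mem_image] at hr
      rcases hr with (⟨t, ht, rfl⟩ | ⟨t, ht, rfl⟩) | ⟨t, ht, rfl⟩ <;>
      · obtain ⟨h, hth⟩ := (hmemG t).1 ht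
        have := (mem_preim_iff S h.1 t).1 (hTsub h.1 h.2 hth)
        tauto
    · -- S.H = G.image (muT S)
      apply Finset.Subset.antisymm
      · intro h hh
        have hpos := S.w_pos h hh
        have : (T h hh).Nonempty := by
          rw [← Finset.card_pos, hTcard h hh]; exact hpos
        obtain ⟨t, ht⟩ := this
        refine Finset.mem_image.2 ⟨t, (hmemG t).2 ⟨⟨h, hh⟩, ht⟩, hmuT ⟨h, hh⟩ t ht⟩
      · intro h hh
        obtain ⟨t, htG, rfl⟩ := Finset.mem_image.1 hh
        obtain ⟨h', ht'⟩ := (hmemG t).1 htG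
        rw [hmuT h' t ht']
        exact h'.2
    · -- weights
      intro h hh
      have : G.filter (fun t => muT S t = h) = T h hh := by
        ext t
        rw [Finset.mem_filter]
        constructor
        · rintro ⟨htG, hmt⟩
          obtain ⟨h', ht'⟩ := (hmemG t).1 htG
          have : h'.1 = h := by rw [← hmuT h' t ht', hmt]
          cases h'
          subst this
          exact ht'
        · intro ht
          exact ⟨(hmemG t).2 ⟨⟨h, hh⟩, ht⟩, hmuT ⟨h, hh⟩ t ht⟩
      rw [this, hTcard h hh]
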